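/- Let $\lambda, \mu > 0$ and let $k$ be a positive integer. Then the five-dimensional integral $\int_{\mathbb{R}_+^5} \mathbf{1}\{z_1 > z_5 + \max(z_3, x)\}\,\mathbf{1}\{z_3 > x\}\,\mathbf{1}\{z_2 > y\}\,\mathbf{1}\{z_3 + z_4 + z_5 - z_1 > y\}\, \frac{\lambda^k z_5^{k-1}}{\Gamma(k)} e^{-\lambda z_5} \mu^4 e^{-\mu(z_1+z_2+z_3+z_4)}\, dz_1\,dz_2\,dz_3\,dz_4\,dz_5$ equals $\frac{e^{-2\mu(x+y)}}{4}\left(\frac{\lambda}{\lambda+\mu}\right)^k$ for all $x, y \geq 0$. -/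

import Mathlib

/-!
Integrate from the inside out. For `z₃ > x` the constraints on `z₁` cut out the window
`z₅ + z₃ < z₁ < z₅ + z₃ + (z₄ - y)`, which is nonempty exactly when `z₄ > y`; integrating `z₁`
over it leaves a product of one-variable factors in `z₂, z₃, z₄` and `z₅`. The `z₂, z₃, z₄`
integrals are elementary exponential integrals, and the remaining `z₅` integral is the Laplace
transform `(λ / (λ + μ)) ^ k` of the Gamma`(k, λ)` density at `μ`.
-/

open MeasureTheory Real Set

lemma integrableOn_exp_neg_mul_Ioi {a : ℝ} (ha : 0 < a) (c : ℝ) :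
    IntegrableOn (fun t => exp (-(a * t))) (Ioi c) := by
  simpa only [neg_mul] using exp_neg_integrableOn_Ioi c ha

lemma integral_exp_neg_mul_Ioi {a : ℝ} (ha : 0 < a) (c : ℝ) :
    ∫ t in Ioi c, exp (-(a * t)) = exp (-(a * c)) / a := by
  simpa only [neg_mul, neg_div, div_neg, neg_neg] using integral_exp_mul_Ioi (neg_neg_of_pos ha) c

lemma integral_exp_neg_mul_Ioo {a p q : ℝ} (ha : 0 < a) (hpq : p ≤ q) :
    ∫ t in Ioo p q, exp (-(a * t)) = (exp (-(a * p)) - exp (-(a * q))) / a := by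
  rw [← integral_Ioc_eq_integral_Ioo, ← intervalIntegral.integral_of_le hpq,
    ← intervalIntegral.integral_Ioi_sub_Ioi (integrableOn_exp_neg_mul_Ioi ha p) hpq,
    integral_exp_neg_mul_Ioi ha, integral_exp_neg_mul_Ioi ha, sub_div]

lemma setIntegral_Ioi_indicator_Ioi {E : Type*} [NormedAddCommGroup E] [NormedSpace ℝ E]
    {f : ℝ → E} {a c : ℝ} (hac : a ≤ c) :
    ∫ t in Ioi a, (Ioi c).indicator f t = ∫ t in Ioi c, f t := by
  rw [setIntegral_indicator measurableSet_Ioi, inter_eq_right.2 (Ioi_subset_Ioi hac)]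

lemma integral_Ioi_exp_neg_mul_sub {mu : ℝ} (hmu : 0 < mu) (y : ℝ) :
    ∫ t in Ioi y, (exp (-(mu * t)) - exp (mu * y) * exp (-(2 * mu * t))) =
      exp (-(mu * y)) / (2 * mu) := by
  have h2mu : 0 < 2 * mu := by positivity
  rw [integral_sub (integrableOn_exp_neg_mul_Ioi hmu y)
      ((integrableOn_exp_neg_mul_Ioi h2mu y).const_mul _),
    integral_const_mul, integral_exp_neg_mul_Ioi hmu, integral_exp_neg_mul_Ioi h2mu,
    mul_div_assoc', ← exp_add]
  field_simp
  ring_nf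

lemma integral_gamma_density_mul_exp_neg_mul_Ioi {lam mu : ℝ} {k : ℕ} (hk : 1 ≤ k)
    (hlm : 0 < lam + mu) :
    ∫ t in Ioi 0, lam ^ k * t ^ (k - 1) / Gamma k * exp (-(lam * t)) * exp (-(mu * t)) =
      (lam / (lam + mu)) ^ k := by
  have hk' : (0 : ℝ) < k := by exact_mod_cast hk
  have hGamma : ∫ t in Ioi 0, t ^ (k - 1) * exp (-((lam + mu) * t)) =
      (1 / (lam + mu)) ^ k * Gamma k := by
    rw [← rpow_natCast _ k, ← integral_rpow_mul_exp_neg_mul_Ioi hk' hlm]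
    refine setIntegral_congr_fun measurableSet_Ioi fun t _ => ?_
    rw [← rpow_natCast t, Nat.cast_sub hk, Nat.cast_one]
  have hfactor : ∀ t : ℝ, lam ^ k * t ^ (k - 1) / Gamma k * exp (-(lam * t)) * exp (-(mu * t)) =
      lam ^ k / Gamma k * (t ^ (k - 1) * exp (-((lam + mu) * t))) := by
    intro t
    rw [add_mul, neg_add, exp_add]
    ring
  simp only [hfactor, integral_const_mul, hGamma]
  field_simp [(Gamma_pos_of_pos hk').ne']
  rw [← mul_pow, mul_one_div]

lemma integral_departure_window {mu x y z5 : ℝ} (hmu : 0 < mu) (hx : 0 ≤ x) (hz5 : 0 ≤ z5)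
    (c z2 z3 z4 : ℝ) :
    ∫ z1 in Ioi 0, (if z1 > z5 + max z3 x ∧ z3 > x ∧ z2 > y ∧ z3 + z4 + z5 - z1 > y then
        c * mu ^ 4 * exp (-(mu * (z1 + z2 + z3 + z4))) else 0) =
      c * exp (-(mu * z5)) *
        (mu ^ 3 *
          (Ioi y).indicator (fun t => exp (-(mu * t)) - exp (mu * y) * exp (-(2 * mu * t))) z4 *
          (Ioi x).indicator (fun t => exp (-(2 * mu * t))) z3 *
          (Ioi y).indicator (fun t => exp (-(mu * t))) z2) := by
  have hwindow : ∀ z1, (z1 > z5 + max z3 x ∧ z3 > x ∧ z2 > y ∧ z3 + z4 + z5 - z1 > y) ↔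
      (z3 > x ∧ z2 > y ∧ z4 > y) ∧ z1 ∈ Ioo (z5 + z3) (z3 + z4 + z5 - y) := by
    intro z1
    constructor
    · rintro ⟨h1, h3, h2, h4⟩
      rw [max_eq_left h3.le] at h1
      exact ⟨⟨h3, h2, by linarith⟩, h1, by linarith⟩
    · rintro ⟨⟨h3, h2, -⟩, h1, h4⟩
      exact ⟨by rwa [max_eq_left h3.le], h3, h2, by linarith⟩
  by_cases h : z3 > x ∧ z2 > y ∧ z4 > y
  · obtain ⟨h3, h2, h4⟩ := h
    have hintegrand : (fun z1 => if z1 > z5 + max z3 x ∧ z3 > x ∧ z2 > y ∧ z3 + z4 + z5 - z1 > y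
          then c * mu ^ 4 * exp (-(mu * (z1 + z2 + z3 + z4))) else 0) =
        (Ioo (z5 + z3) (z3 + z4 + z5 - y)).indicator
          (fun z1 => c * mu ^ 4 * exp (-(mu * (z2 + z3 + z4))) * exp (-(mu * z1))) := by
      ext z1
      rw [indicator_apply, mul_assoc _ (exp _), ← exp_add]
      exact if_congr ((hwindow z1).trans (and_iff_right ⟨h3, h2, h4⟩)) (by ring_nf) rfl
    have hsub : Ioo (z5 + z3) (z3 + z4 + z5 - y) ⊆ Ioi 0 := fun t ht =>
      mem_Ioi.2 (by linarith [ht.1])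
    rw [hintegrand, setIntegral_indicator measurableSet_Ioo, inter_eq_right.2 hsub,
      integral_const_mul, integral_exp_neg_mul_Ioo hmu (by linarith),
      indicator_of_mem (mem_Ioi.2 h4), indicator_of_mem (mem_Ioi.2 h3),
      indicator_of_mem (mem_Ioi.2 h2)]
    have hexp : exp (-(mu * (z2 + z3 + z4))) *
          (exp (-(mu * (z5 + z3))) - exp (-(mu * (z3 + z4 + z5 - y)))) =
        exp (-(mu * z5)) * ((exp (-(mu * z4)) - exp (mu * y) * exp (-(2 * mu * z4))) *
          exp (-(2 * mu * z3)) * exp (-(mu * z2))) := by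
      simp only [mul_sub, sub_mul, ← exp_add]
      ring_nf
    rw [mul_div_assoc', div_eq_iff hmu.ne']
    linear_combination c * mu ^ 4 * hexp
  · have hzero : ∀ z1, ¬(z1 > z5 + max z3 x ∧ z3 > x ∧ z2 > y ∧ z3 + z4 + z5 - z1 > y) :=
      fun z1 hz1 => h ((hwindow z1).1 hz1).1
    simp only [hzero, if_false, integral_zero]
    rw [not_and_or, not_and_or] at h
    rcases h with h | h | h <;> simp [indicator_of_notMem, h]

theorem tandem_joint_second_term (lam mu : ℝ) (hlam : 0 < lam) (hmu : 0 < mu)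
    (k : ℕ) (hk : 1 ≤ k) (x y : ℝ) (hx : 0 ≤ x) (hy : 0 ≤ y) :
    (∫ z5 in Set.Ioi (0:ℝ), ∫ z4 in Set.Ioi (0:ℝ), ∫ z3 in Set.Ioi (0:ℝ),
      ∫ z2 in Set.Ioi (0:ℝ), ∫ z1 in Set.Ioi (0:ℝ),
        (if z1 > z5 + max z3 x ∧ z3 > x ∧ z2 > y ∧ z3 + z4 + z5 - z1 > y then
          lam ^ k * z5 ^ (k - 1) / Real.Gamma k * Real.exp (-(lam * z5)) *
            mu ^ 4 * Real.exp (-(mu * (z1 + z2 + z3 + z4)))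
        else 0)) =
      Real.exp (-(2 * mu * (x + y))) / 4 * (lam / (lam + mu)) ^ k := by
  have hinner : ∀ z5 ∈ Ioi (0 : ℝ),
      (∫ z4 in Ioi (0:ℝ), ∫ z3 in Ioi (0:ℝ), ∫ z2 in Ioi (0:ℝ), ∫ z1 in Ioi (0:ℝ),
        (if z1 > z5 + max z3 x ∧ z3 > x ∧ z2 > y ∧ z3 + z4 + z5 - z1 > y then
          lam ^ k * z5 ^ (k - 1) / Gamma k * exp (-(lam * z5)) *
            mu ^ 4 * exp (-(mu * (z1 + z2 + z3 + z4)))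
        else 0)) =
      lam ^ k * z5 ^ (k - 1) / Gamma k * exp (-(lam * z5)) * exp (-(mu * z5)) *
        (exp (-(2 * mu * (x + y))) / 4) := by
    intro z5 hz5
    simp only [integral_departure_window hmu hx (le_of_lt hz5), integral_const_mul,
      integral_mul_const, setIntegral_Ioi_indicator_Ioi hx, setIntegral_Ioi_indicator_Ioi hy,
      integral_exp_neg_mul_Ioi hmu, integral_exp_neg_mul_Ioi (by positivity : 0 < 2 * mu),
      integral_Ioi_exp_neg_mul_sub hmu]
    rw [mul_add, neg_add, exp_add, show 2 * mu * y = mu * y + mu * y by ring, neg_add, exp_add]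
    field_simp
    ring
  rw [setIntegral_congr_fun measurableSet_Ioi hinner, integral_mul_const,
    integral_gamma_density_mul_exp_neg_mul_Ioi hk (by linarith)]
  ring
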